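/- Let a, b be coprime integers with a odd, and c an integer. Define Q_c(s,t,φ) = (T_c(t+φ) − T_c(s+φ))/(t−s) and R_{a,b,c}(φ) = ∏_{i=1}^{(a−1)/2} ∏_{j=1}^{b−1} Q_c(2cos(iπ/a + jπ/b), 2cos(iπ/a − jπ/b), φ). Then R_{a,b,c} is a polynomial in φ with integer coefficients. -/

import Mathlib

open Polynomial Real

/-- The monic Chebyshev polynomials of the first kind. -/
noncomputable def T : ℕ → Polynomial ℝ
  | 0 => 2
  | 1 => X
  | n + 2 => X * T (n + 1) - T n

/-- \`Q c s t φ = (T_c(t+φ) − T_c(s+φ))/(t−s)\`. -/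
noncomputable def Q (c : ℕ) (s t φ : ℝ) : ℝ :=
  ((T c).eval (t + φ) - (T c).eval (s + φ)) / (t - s)

/-- The discriminant function \`R a b c φ\`. -/
noncomputable def R (a b c : ℕ) (φ : ℝ) : ℝ :=
  ∏ i ∈ Finset.Icc 1 ((a - 1) / 2), ∏ j ∈ Finset.Icc 1 (b - 1),
    Q c (2 * Real.cos ((i : ℝ) * Real.pi / a + (j : ℝ) * Real.pi / b))
        (2 * Real.cos ((i : ℝ) * Real.pi / a - (j : ℝ) * Real.pi / b)) φ

/-!
Write `x = 2 cos α`, `y = 2 cos β`, so that `s = 2 cos (α + β)` and `t = 2 cos (α - β)` satisfy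
`s + t = x y` and `s t = x² + y² - 4`. The divided difference `Q_c(s, t, φ)` is an integer
polynomial in `s + t`, `s t`, `φ`, hence a factor of `R` is `H(x_i, y_j, φ)` for an integer
polynomial `H`. The `y_j = 2 cos (jπ/b)` are the roots of the monic integer polynomial `S_{b-1}`,
so `∏_j H(x, y_j, φ)` is a resultant: an integer polynomial `K(x, φ)`. It is even in `x` because
`y ↦ -y` permutes the `y_j`, so `K(x, φ) = L(x², φ)`. For `a = 2m + 1` the `x_i²` are the roots of
the monic integer polynomial `W` with `W(X²) = S_{2m}(X)`, and `∏_i L(x_i², φ)` is again a resultant.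
-/

open Finset

section DividedDifference

variable {A B : Type*} [CommRing A] [CommRing B]

theorem sub_mul_eval_dickson_two (u v : A) (n : ℕ) :
    (u - v) * (dickson 2 (u * v) n).eval (u + v) = u ^ (n + 1) - v ^ (n + 1) := by
  induction n using Nat.twoStepInduction with
  | zero => norm_num [dickson_zero]
  | one => simp [dickson_one]; ring
  | more n ih₀ ih₁ =>
    rw [dickson_add_two, eval_sub, eval_mul, eval_mul, eval_X, eval_C]
    linear_combination (u + v) * ih₁ - u * v * ih₀

noncomputable def divDiff (P : ℤ[X]) (e₁ e₂ : A) : A :=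
  ∑ n ∈ range P.natDegree, (P.coeff (n + 1) : A) * (dickson 2 e₂ n).eval e₁

theorem map_divDiff (f : A →+* B) (P : ℤ[X]) (e₁ e₂ : A) :
    f (divDiff P e₁ e₂) = divDiff P (f e₁) (f e₂) := by
  simp only [divDiff, map_sum, map_mul, map_intCast, ← map_dickson, eval_map, eval₂_at_apply]

theorem sub_mul_divDiff (P : ℤ[X]) (u v : A) :
    (u - v) * divDiff P (u + v) (u * v) = aeval u P - aeval v P := by
  rw [divDiff, mul_sum, aeval_eq_sum_range, aeval_eq_sum_range, ← sum_sub_distrib,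
    sum_range_succ']
  simp [mul_left_comm _ (P.coeff _ : A), sub_mul_eval_dickson_two, zsmul_eq_mul, mul_sub]

/-- `Q c s t φ` in the coordinates `x = 2 cos α`, `y = 2 cos β` of `s = 2 cos (α + β)`,
`t = 2 cos (α - β)`: the arguments are `(t + φ) + (s + φ)` and `(t + φ) (s + φ)`. -/
noncomputable def chebFactor (c : ℕ) (x y φ : A) : A :=
  divDiff (Chebyshev.C ℤ c) (x * y + 2 * φ) (x ^ 2 + y ^ 2 - 4 + φ * x * y + φ ^ 2)

theorem map_chebFactor (f : A →+* B) (c : ℕ) (x y φ : A) :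
    f (chebFactor c x y φ) = chebFactor c (f x) (f y) (f φ) := by
  simp [chebFactor, map_divDiff, map_ofNat]

theorem eval_map_chebFactor (f : A →+* B) (c : ℕ) (x φ : A) (z : B) :
    ((chebFactor c (C x) X (C φ)).map f).eval z = chebFactor c (f x) z (f φ) := by
  rw [← coe_mapRingHom, ← coe_evalRingHom, ← RingHom.comp_apply, map_chebFactor]
  simp

theorem chebFactor_neg_neg (c : ℕ) (x y φ : A) :
    chebFactor c (-x) (-y) φ = chebFactor c x y φ := by
  simp only [chebFactor, neg_sq, mul_neg, neg_mul, neg_neg]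

end DividedDifference

theorem T_eq_chebyshev_C (c : ℕ) : T c = Chebyshev.C ℝ c := by
  induction c using Nat.twoStepInduction with
  | zero => simp [T]
  | one => simp [T]
  | more n ih₀ ih₁ =>
    rw [T, ih₀, ih₁]
    exact_mod_cast (Chebyshev.C_add_two ℝ n).symm

theorem Q_two_mul_cos_add_sub (c : ℕ) {α β : ℝ} (hα : sin α ≠ 0) (hβ : sin β ≠ 0) (φ : ℝ) :
    Q c (2 * cos (α + β)) (2 * cos (α - β)) φ = chebFactor c (2 * cos α) (2 * cos β) φ := by
  have hsum : 2 * cos α * (2 * cos β) + 2 * φ =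
      (2 * cos (α - β) + φ) + (2 * cos (α + β) + φ) := by
    rw [cos_add, cos_sub]; ring
  have hprod : (2 * cos α) ^ 2 + (2 * cos β) ^ 2 - 4 + φ * (2 * cos α) * (2 * cos β) + φ ^ 2 =
      (2 * cos (α - β) + φ) * (2 * cos (α + β) + φ) := by
    rw [cos_add, cos_sub]
    linear_combination (4 * sin β ^ 2) * sin_sq_add_cos_sq α +
      (4 - 4 * cos α ^ 2) * sin_sq_add_cos_sq β
  have hdiff : 2 * cos (α - β) - 2 * cos (α + β) = 4 * sin α * sin β := by
    rw [cos_add, cos_sub]; ring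
  have key := sub_mul_divDiff (Chebyshev.C ℤ c) (2 * cos (α - β) + φ) (2 * cos (α + β) + φ)
  rw [add_sub_add_right_eq_sub, Chebyshev.aeval_C, Chebyshev.aeval_C, ← T_eq_chebyshev_C] at key
  rw [Q, chebFactor, hsum, hprod, ← key, mul_div_cancel_left₀ _ (hdiff ▸ by positivity)]

theorem sin_nat_mul_pi_div_ne_zero {i n : ℕ} (hi : 0 < i) (hin : i < n) :
    sin (i * π / n) ≠ 0 := by
  have hi' : (0 : ℝ) < i := by exact_mod_cast hi
  have hin' : (i : ℝ) < n := by exact_mod_cast hin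
  refine (sin_pos_of_pos_of_lt_pi (div_pos (mul_pos hi' pi_pos) (hi'.trans hin')) ?_).ne'
  rw [div_lt_iff₀ (hi'.trans hin'), mul_comm]
  gcongr

theorem R_eq_prod_chebFactor (a b c : ℕ) (φ : ℝ) :
    R a b c φ = ∏ i ∈ Icc 1 ((a - 1) / 2), ∏ j ∈ Icc 1 (b - 1),
      chebFactor c (2 * cos (i * π / a)) (2 * cos (j * π / b)) φ := by
  refine prod_congr rfl fun i hi => prod_congr rfl fun j hj => ?_
  rw [mem_Icc] at hi hj
  exact Q_two_mul_cos_add_sub c (sin_nat_mul_pi_div_ne_zero (by omega) (by omega))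
    (sin_nat_mul_pi_div_ne_zero (by omega) (by omega)) φ

theorem exists_forall_map_eq_prod_eval {ι K A B : Type*} [CommRing K] [CommRing A] [CommRing B]
    [Nontrivial B] [Algebra K B] {W : ℤ[X]} {s : Finset ι} {r : ι → K}
    (hW : W.map (Int.castRingHom K) = ∏ i ∈ s, (X - C (r i))) (q : A[X]) :
    ∃ k : A, ∀ f : A →+* B, f k = ∏ i ∈ s, (q.map f).eval (algebraMap K B (r i)) := by
  refine ⟨resultant (W.map (Int.castRingHom A)) q s.card q.natDegree, fun f => ?_⟩
  have hWB : (W.map (Int.castRingHom A)).map f = ∏ i ∈ s, (X - C (algebraMap K B (r i))) := by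
    rw [Polynomial.map_map, Subsingleton.elim (f.comp _) ((algebraMap K B).comp (Int.castRingHom K)),
      ← Polynomial.map_map, hW, Polynomial.map_prod]
    simp
  have hdeg : (∏ i ∈ s, (X - C (algebraMap K B (r i)))).natDegree = s.card := by
    rw [natDegree_prod_of_monic _ _ fun i _ => monic_X_sub_C _]
    simp
  rw [← resultant_map_map, hWB, ← hdeg, resultant_prod_left _ _ _ _ (by simp) natDegree_map_le]
  refine prod_congr rfl fun i _ => ?_
  rw [natDegree_X_sub_C, resultant_X_sub_C_left _ _ _ natDegree_map_le]

theorem prod_range_succ_eq_prod_Icc {M : Type*} [CommMonoid M] (f : ℕ → M) (n : ℕ) :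
    ∏ k ∈ range n, f (k + 1) = ∏ k ∈ Icc 1 n, f k := by
  rw [range_eq_Ico, prod_Ico_add' f 0 n 1, zero_add, Ico_add_one_right_eq_Icc]

theorem chebyshev_U_real_eq_prod (n : ℕ) :
    Chebyshev.U ℝ n = C (2 ^ n) * ∏ k ∈ Icc 1 n, (X - C (cos (k * π / (n + 1)))) := by
  have hinj := (range n).nodup_map_iff_injOn.mp (Chebyshev.roots_U_real_nodup n)
  have hcard : Multiset.card (Chebyshev.U ℝ n).roots = (Chebyshev.U ℝ n).natDegree := by
    rw [Chebyshev.roots_U_real, Chebyshev.natDegree_U_natCast, ← Finset.card_def,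
      card_image_of_injOn hinj, card_range]
  conv_lhs => rw [← C_leadingCoeff_mul_prod_multiset_X_sub_C hcard]
  rw [Chebyshev.leadingCoeff_U_natCast, Chebyshev.roots_U_real, ← Finset.prod_eq_multiset_prod,
    prod_image hinj, ← prod_range_succ_eq_prod_Icc]
  push_cast
  rfl

theorem chebyshev_S_real_eq_prod (b : ℕ) :
    Chebyshev.S ℝ (b - 1 : ℕ) = ∏ j ∈ Icc 1 (b - 1), (X - C (2 * cos (j * π / b))) := by
  obtain _ | n := b
  · simp
  have hC : (C (2 ^ n) : ℝ[X]) = ∏ _k ∈ Icc 1 n, C 2 := by simp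
  rw [Chebyshev.S_eq_U_comp_half_mul_X, Nat.add_sub_cancel, chebyshev_U_real_eq_prod, mul_comp,
    C_comp, Polynomial.prod_comp, hC, ← prod_mul_distrib]
  refine prod_congr rfl fun k _ => ?_
  rw [sub_comp, X_comp, C_comp, mul_sub, ← mul_assoc, ← C_mul, ← C_mul, mul_invOf_self, C_1,
    one_mul]
  push_cast
  rfl

theorem prod_Icc_two_mul_eq_prod_mul_reflect {M : Type*} [CommMonoid M] (g : ℕ → M) (m : ℕ) :
    ∏ j ∈ Icc 1 (2 * m), g j = ∏ i ∈ Icc 1 m, g i * g (2 * m + 1 - i) := by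
  have hreflect := prod_Ico_reflect g 1 (n := 2 * m + 1) (m := m + 1) (by omega)
  rw [show 2 * m + 1 + 1 - (m + 1) = m + 1 by omega, Nat.add_sub_cancel] at hreflect
  rw [prod_mul_distrib, ← Ico_add_one_right_eq_Icc, ← Ico_add_one_right_eq_Icc,
    ← prod_Ico_consecutive g (by omega : 1 ≤ m + 1) (by omega : m + 1 ≤ 2 * m + 1), hreflect]

theorem chebyshev_S_real_two_mul_eq_expand (m : ℕ) :
    Chebyshev.S ℝ (2 * m : ℕ) =
      expand ℝ 2 (∏ i ∈ Icc 1 m, (X - C ((2 * cos (i * π / (2 * m + 1 : ℕ))) ^ 2))) := by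
  have h := chebyshev_S_real_eq_prod (2 * m + 1)
  rw [Nat.add_sub_cancel, prod_Icc_two_mul_eq_prod_mul_reflect] at h
  rw [h, map_prod]
  refine prod_congr rfl fun i hi => ?_
  have hi : i ≤ 2 * m + 1 := by grind
  have hcos : cos ((2 * m + 1 - i : ℕ) * π / (2 * m + 1 : ℕ)) =
      -cos (i * π / (2 * m + 1 : ℕ)) := by
    rw [← cos_pi_sub]
    congr 1
    push_cast [Nat.cast_sub hi]
    field_simp
  rw [hcos, mul_neg, C_neg, map_sub, expand_X, expand_C, C_pow]
  ring

theorem map_contract_chebyshev_S_two_mul (m : ℕ) :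
    (contract 2 (Chebyshev.S ℤ (2 * m : ℕ))).map (Int.castRingHom ℝ) =
      ∏ i ∈ Icc 1 m, (X - C ((2 * cos (i * π / (2 * m + 1 : ℕ))) ^ 2)) := by
  rw [map_contract two_ne_zero, Chebyshev.map_S, chebyshev_S_real_two_mul_eq_expand,
    contract_expand _ two_ne_zero]

theorem prod_Icc_neg_two_mul_cos {M : Type*} [CommMonoid M] (g : ℝ → M) (b : ℕ) :
    ∏ j ∈ Icc 1 (b - 1), g (-(2 * cos (j * π / b))) =
      ∏ j ∈ Icc 1 (b - 1), g (2 * cos (j * π / b)) := by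
  refine prod_nbij' (b - ·) (b - ·) (by grind) (by grind) (by grind) (by grind) fun j hj => ?_
  have hj : j ≤ b := by grind
  have hb : (b : ℝ) ≠ 0 := by norm_cast; grind
  rw [← mul_neg, ← cos_pi_sub, Nat.cast_sub hj]
  congr 3
  field_simp

theorem eval_add_eval_neg_eq_two_mul_eval_contract {A : Type*} [CommRing A] (P : A[X]) (z : A) :
    P.eval z + P.eval (-z) = 2 * (contract 2 P).eval (z ^ 2) := by
  induction P using Polynomial.induction_on' with
  | add P Q hP hQ =>
    rw [eval_add, eval_add, contract_add two_ne_zero, eval_add]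
    linear_combination hP + hQ
  | monomial n a =>
    obtain ⟨k, rfl | rfl⟩ := Nat.even_or_odd' n
    · have : contract 2 (monomial (2 * k) a) = monomial k a := by
        ext j
        simp only [coeff_contract two_ne_zero, coeff_monomial]
        grind
      simp only [this, eval_monomial, pow_mul, neg_sq]
      ring
    · have : contract 2 (monomial (2 * k + 1) a) = 0 := by
        ext j
        simp only [coeff_contract two_ne_zero, coeff_monomial, coeff_zero]
        grind
      simp only [this, eval_monomial, eval_zero, Odd.neg_pow (odd_two_mul_add_one k)]
      ring

theorem eval_contract_sq_of_eval_neg {A : Type*} [CommRing A] [NoZeroDivisors A] [CharZero A]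
    {P : A[X]} {z : A} (h : P.eval (-z) = P.eval z) :
    (contract 2 P).eval (z ^ 2) = P.eval z := by
  have := eval_add_eval_neg_eq_two_mul_eval_contract P z
  rw [h] at this
  exact mul_left_cancel₀ two_ne_zero (by linear_combination -this)

theorem exists_eval_map_eq_prod_chebFactor (b c : ℕ) :
    ∃ K : ℤ[X][X], ∀ x : ℝ, (K.map (mapRingHom (algebraMap ℤ ℝ))).eval (C x) =
      ∏ j ∈ Icc 1 (b - 1), chebFactor c (C x) (C (2 * cos (j * π / b))) X := by
  obtain ⟨K, hK⟩ := exists_forall_map_eq_prod_eval (B := ℝ[X])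
    ((Chebyshev.map_S _ _).trans (chebyshev_S_real_eq_prod b))
    (chebFactor c (C X) X (C (C X)) : ℤ[X][X][X])
  refine ⟨K, fun x => ?_⟩
  rw [eval_map, ← coe_eval₂RingHom, hK]
  refine prod_congr rfl fun j _ => ?_
  rw [eval_map_chebFactor]
  simp

theorem prod_chebFactor_neg (b c : ℕ) (x : ℝ) :
    ∏ j ∈ Icc 1 (b - 1), chebFactor c (C (-x)) (C (2 * cos (j * π / b))) X =
      ∏ j ∈ Icc 1 (b - 1), chebFactor c (C x) (C (2 * cos (j * π / b))) X := by
  rw [← prod_Icc_neg_two_mul_cos (fun y => chebFactor c (C (-x)) (C y) X)]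
  simp only [C_neg, chebFactor_neg_neg]

theorem discriminant_poly_int_coeffs_general (a b c : ℕ)
    (ha : Odd a) :
    ∃ p : Polynomial ℤ, ∀ φ : ℝ, (Polynomial.aeval φ) p = R a b c φ := by
  obtain ⟨m, rfl⟩ := ha
  obtain ⟨K, hK⟩ := exists_eval_map_eq_prod_chebFactor b c
  have heven (x : ℝ) : (K.map (mapRingHom (algebraMap ℤ ℝ))).eval (-C x) =
      (K.map (mapRingHom (algebraMap ℤ ℝ))).eval (C x) := by
    rw [← C_neg, hK, hK, prod_chebFactor_neg]
  obtain ⟨p, hp⟩ := exists_forall_map_eq_prod_eval (B := ℝ[X])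
    (map_contract_chebyshev_S_two_mul m) (contract 2 K)
  refine ⟨p, fun φ => ?_⟩
  rw [aeval_def, eval₂_eq_eval_map, ← coe_mapRingHom, hp, R_eq_prod_chebFactor,
    show (2 * m + 1 - 1) / 2 = m by omega, eval_prod]
  refine prod_congr rfl fun i _ => ?_
  rw [algebraMap_eq, C_pow, map_contract two_ne_zero, eval_contract_sq_of_eval_neg (heven _), hK,
    eval_prod]
  refine prod_congr rfl fun j _ => ?_
  rw [← coe_evalRingHom, map_chebFactor]
  simp

theorem discriminant_poly_int_coeffs (a b c : ℕ) (hab : Nat.Coprime a b)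
    (ha : Odd a) :
    ∃ p : Polynomial ℤ, ∀ φ : ℝ, (Polynomial.aeval φ) p = R a b c φ :=
  discriminant_poly_int_coeffs_general a b c ha
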